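/- For y(t) = ∫₀ᵗ x(s) ds with x continuous, ϑ^y_{n,k} = 2^{n+5/2} ∫₀^{2^{−n−1}} θ^{x}_{n+1,2k}(s) ds, where θ^x_{n+1,2k}(s) denotes the Faber–Schauder coefficient θ_{n+1,2k} of the shifted function t ↦ x(s+t). -/
import Mathlib

open Finset

/-- Faber–Schauder coefficient of the shifted function `t ↦ x (s + t)`. -/
noncomputable def thetaShift (x : ℝ → ℝ) (m j : ℕ) (s : ℝ) : ℝ :=
  2 ^ ((m : ℝ) / 2) *
    (2 * x (s + (2 * j + 1) / 2 ^ (m + 1)) - x (s + j / 2 ^ m) - x (s + (j + 1) / 2 ^ m))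

noncomputable def vartheta (f : ℝ → ℝ) (n k : ℕ) : ℝ :=
  2 ^ ((3 * (n : ℝ)) / 2 + 3) *
    (f ((4 * k) / 2 ^ (n + 2)) - 2 * f ((4 * k + 1) / 2 ^ (n + 2))
      + 2 * f ((4 * k + 3) / 2 ^ (n + 2)) - f ((4 * k + 4) / 2 ^ (n + 2)))

theorem stmt6 (x : ℝ → ℝ) (hx : Continuous x) (n k : ℕ) (hk : k < 2 ^ n) :
    vartheta (fun t => ∫ s in (0 : ℝ)..t, x s) n k =
      2 ^ ((n : ℝ) + 5 / 2) *
        ∫ s in (0 : ℝ)..(2 : ℝ) ^ (-(n : ℝ) - 1), thetaShift x (n + 1) (2 * k) s := by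
  have hint : ∀ (c a b : ℝ), IntervalIntegrable (fun s => x (s + c)) MeasureTheory.volume a b :=
    fun c a b => (hx.comp (continuous_id.add continuous_const)).intervalIntegrable a b
  have hshift : ∀ c h : ℝ, (∫ s in (0:ℝ)..h, x (s + c))
      = (∫ t in (0:ℝ)..(c + h), x t) - ∫ t in (0:ℝ)..c, x t := by
    intro c h
    rw [intervalIntegral.integral_comp_add_right (fun s => x s) c,
      intervalIntegral.integral_interval_sub_left (hx.intervalIntegrable 0 (c+h))
        (hx.intervalIntegrable 0 c)]
    norm_num [add_comm]
  set H : ℝ := (2:ℝ) ^ (-(n:ℝ) - 1) with hHdef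
  have hH : H = ((2:ℝ) ^ (n+1))⁻¹ := by
    rw [hHdef, show -(n:ℝ) - 1 = -(((n+1:ℕ)):ℝ) by push_cast; ring,
      Real.rpow_neg (by norm_num), Real.rpow_natCast]
  unfold vartheta thetaShift
  rw [intervalIntegral.integral_const_mul]
  rw [intervalIntegral.integral_sub (((hint _ _ _).const_mul 2).sub (hint _ _ _)) (hint _ _ _),
    intervalIntegral.integral_sub ((hint _ _ _).const_mul 2) (hint _ _ _),
    intervalIntegral.integral_const_mul]
  simp only []
  rw [hshift, hshift, hshift]
  have h2 : (0:ℝ) < 2 ^ (n+1) := by positivity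
  have h2' : (0:ℝ) < 2 ^ (n+2) := by positivity
  have e1 : ((2*k:ℕ):ℝ) / 2 ^ (n+1) = (4 * (k:ℝ)) / 2 ^ (n+2) := by
    push_cast; rw [pow_succ]; field_simp; ring
  have e2 : (2 * ((2*k:ℕ):ℝ) + 1) / 2 ^ (n+1+1) = (4 * (k:ℝ) + 1) / 2 ^ (n+2) := by
    push_cast; ring_nf
  have e3 : (4 * (k:ℝ) + 1) / 2 ^ (n+2) + H = (4 * (k:ℝ) + 3) / 2 ^ (n+2) := by
    rw [hH]; rw [pow_succ]; field_simp; ring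
  have e4 : (4 * (k:ℝ)) / 2 ^ (n+2) + H = (((2*k:ℕ):ℝ) + 1) / 2 ^ (n+1) := by
    rw [hH]; push_cast; rw [pow_succ]; field_simp; ring
  have e5 : (((2*k:ℕ):ℝ) + 1) / 2 ^ (n+1) + H = (4 * (k:ℝ) + 4) / 2 ^ (n+2) := by
    rw [hH]; push_cast; rw [pow_succ]; field_simp; ring
  rw [e1, e2, e3, e4, e5]
  have hc : (2:ℝ) ^ ((n:ℝ) + 5/2) * (2:ℝ) ^ (((n+1:ℕ):ℝ) / 2) = 2 ^ ((3*(n:ℝ))/2 + 3) := by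
    rw [← Real.rpow_add (by norm_num : (0:ℝ) < 2)]
    congr 1; push_cast; ring
  rw [← hc]
  ring
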